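/- arXiv:2307.12305 — 6 statements merged into one kernel-verified Lean document; each statement's English description precedes it below -/
import Mathlib

section
/- There is no deterministic mechanism, defined on all MVbM instances, that is truthful and always returns a maximum vertex-weighted b-matching of the reported edge profile. -/
abbrev Matching (n m : ℕ) := Fin m → Option (Fin n)

def load {n m : ℕ} (μ : Matching n m) (i : Fin n) : ℕ :=
  (Finset.univ.filter fun j => μ j = some i).card

def assignedSet {n m : ℕ} (μ : Matching n m) (i : Fin n) : Finset (Fin m) :=
  Finset.univ.filter fun j => μ j = some i

def IsBMatching {n m : ℕ} (b : Fin n → ℕ) (E : Fin n → Finset (Fin m))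
    (μ : Matching n m) : Prop :=
  (∀ j i, μ j = some i → j ∈ E i) ∧ ∀ i, load μ i ≤ b i

noncomputable def util {n m : ℕ} (q : Fin m → ℝ) (μ : Matching n m) (i : Fin n) : ℝ :=
  ∑ j ∈ assignedSet μ i, q j

noncomputable def welfare {n m : ℕ} (q : Fin m → ℝ) (μ : Matching n m) : ℝ :=
  ∑ i, util q μ i

/-- Task processing order: decreasing value, ties broken by smaller task index. -/
noncomputable def taskOrder {m : ℕ} (q : Fin m → ℝ) : List (Fin m) :=
  (List.finRange m).mergeSort fun j k => decide (q k < q j ∨ (q j = q k ∧ j ≤ k))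

noncomputable def apStep {n m : ℕ} (b : Fin n → ℕ) (E : Fin n → Finset (Fin m))
    (μ : Matching n m) (j : Fin m) : Matching n m :=
  match (List.finRange n).find? (fun i => decide (j ∈ E i ∧ load μ i < b i)) with
  | some i => Function.update μ j (some i)
  | none => μ

/-- The mechanism `M_AP`. -/
noncomputable def MAP {n m : ℕ} (b : Fin n → ℕ) (q : Fin m → ℝ)
    (E : Fin n → Finset (Fin m)) : Matching n m :=
  (taskOrder q).foldl (apStep b E) (fun _ => none)

/-- The `min k |S|` highest-valued tasks of `S` (ties broken by smaller index). -/
noncomputable def topTasks {m : ℕ} (q : Fin m → ℝ) (S : Finset (Fin m)) (k : ℕ) :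
    Finset (Fin m) :=
  (((taskOrder q).filter fun j => decide (j ∈ S)).take k).toFinset

noncomputable def remTasks {n m : ℕ} (b : Fin n → ℕ) (q : Fin m → ℝ)
    (E : Fin n → Finset (Fin m)) : ℕ → Finset (Fin m)
  | 0 => Finset.univ
  | i + 1 =>
    if h : i < n then
      remTasks b q E i \ topTasks q (E ⟨i, h⟩ ∩ remTasks b q E i) (b ⟨i, h⟩)
    else remTasks b q E i

/-- Agent `i`'s FCFS policy / allocation `B_i`. -/
noncomputable def FCFS {n m : ℕ} (b : Fin n → ℕ) (q : Fin m → ℝ)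
    (E : Fin n → Finset (Fin m)) (i : Fin n) : Finset (Fin m) :=
  topTasks q (E i ∩ remTasks b q E i.val) (b i)

/-- A deterministic mechanism in the Edge Manipulation Setting: for every numbers of
agents and tasks, capacities, task values, and reported edge profile, it returns a
matching. -/
def Mechanism := ∀ (n m : ℕ), (Fin n → ℕ) → (Fin m → ℝ) →
    (Fin n → Finset (Fin m)) → Matching n m

/-- The mechanism always returns a `b`-matching of the reported edge profile. -/
def Feasible (M : Mechanism) : Prop :=
  ∀ (n m : ℕ) (b : Fin n → ℕ) (q : Fin m → ℝ) (E : Fin n → Finset (Fin m)),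
    IsBMatching b E (M n m b q E)

/-- A valid MVbM instance: every capacity is at least `1` and every task value is
positive. -/
def ValidInstance {n m : ℕ} (b : Fin n → ℕ) (q : Fin m → ℝ) : Prop :=
  (∀ i, 1 ≤ b i) ∧ (∀ j, 0 < q j)

/-- Truthfulness: no agent can increase its utility by reporting a nonempty subset of
its true edge set. -/
def Truthful (M : Mechanism) : Prop :=
  ∀ (n m : ℕ) (b : Fin n → ℕ) (q : Fin m → ℝ), ValidInstance b q →
    ∀ (E : Fin n → Finset (Fin m)) (i : Fin n) (S : Finset (Fin m)),
      S.Nonempty → S ⊆ E i →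
      util q (M n m b q (Function.update E i S)) i ≤ util q (M n m b q E) i

/-- The mechanism always returns a maximum vertex-weighted `b`-matching of the reported
edge profile. -/
def Optimal (M : Mechanism) : Prop :=
  ∀ (n m : ℕ) (b : Fin n → ℕ) (q : Fin m → ℝ), ValidInstance b q →
    ∀ (E : Fin n → Finset (Fin m)) (μ : Matching n m),
      IsBMatching b E μ → welfare q μ ≤ welfare q (M n m b q E)


def b2 : Fin 2 → ℕ := fun _ => 1
noncomputable def q2 : Fin 2 → ℝ := fun j => if j = 0 then 2 else 1
def Ef2 : Fin 2 → Finset (Fin 2) := fun _ => Finset.univ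

lemma util2 (q : Fin 2 → ℝ) (μ : Matching 2 2) (i : Fin 2) :
    util q μ i = (if μ 0 = some i then q 0 else 0) + (if μ 1 = some i then q 1 else 0) := by
  rw [util, assignedSet, Finset.sum_filter, Fin.sum_univ_two]

lemma load2 (μ : Matching 2 2) (i : Fin 2) :
    load μ i = (if μ 0 = some i then 1 else 0) + (if μ 1 = some i then 1 else 0) := by
  rw [load, Finset.card_filter, Fin.sum_univ_two]

lemma welfare2 (q : Fin 2 → ℝ) (μ : Matching 2 2) :
    welfare q μ = util q μ 0 + util q μ 1 := by
  rw [welfare, Fin.sum_univ_two]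

lemma cases2 : ∀ v : Option (Fin 2), v = none ∨ v = some 0 ∨ v = some 1 := by decide

lemma struct2 (μ : Matching 2 2) (hl0 : load μ 0 ≤ 1) (hl1 : load μ 1 ≤ 1)
    (hw : (3:ℝ) ≤ welfare q2 μ) :
    (μ 0 = some 0 ∧ μ 1 = some 1) ∨ (μ 0 = some 1 ∧ μ 1 = some 0) := by
  rw [load2] at hl0 hl1
  rw [welfare2, util2, util2] at hw
  rcases cases2 (μ 0) with h0 | h0 | h0 <;> rcases cases2 (μ 1) with h1 | h1 | h1 <;>
    simp [h0, h1, q2] at hl0 hl1 hw ⊢ <;> linarith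

/-- There is no deterministic truthful mechanism that always returns a maximum
vertex-weighted `b`-matching. -/
theorem no_truthful_optimal_mechanism :
    ¬ ∃ M : Mechanism, Feasible M ∧ Truthful M ∧ Optimal M := by
  rintro ⟨M, hF, hT, hO⟩
  have hV : ValidInstance b2 q2 := by
    refine ⟨fun i => le_refl 1, fun j => ?_⟩
    by_cases h : j = 0 <;> simp [q2, h]
  -- the matching on the full profile
  have hBstar : IsBMatching b2 Ef2 (fun j => some j) := by
    constructor
    · intro j i _; simp [Ef2]
    · decide
  have hwstar : welfare q2 (fun j : Fin 2 => some j) = 3 := by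
    rw [welfare2, util2, util2]; norm_num [q2]
  have hge : (3:ℝ) ≤ welfare q2 (M 2 2 b2 q2 Ef2) := by
    rw [← hwstar]; exact hO 2 2 b2 q2 hV Ef2 _ hBstar
  obtain ⟨hE, hL⟩ := hF 2 2 b2 q2 Ef2
  rcases struct2 _ (hL 0) (hL 1) hge with ⟨h0, h1⟩ | ⟨h0, h1⟩
  · -- agent 1 gets task 1 (value 1); deviates to {0}
    have hu1 : util q2 (M 2 2 b2 q2 Ef2) 1 = 1 := by
      rw [util2]; simp [h0, h1, q2]
    set E' : Fin 2 → Finset (Fin 2) := Function.update Ef2 1 {0} with hE'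
    have htr := hT 2 2 b2 q2 hV Ef2 1 {0} ⟨0, Finset.mem_singleton_self 0⟩
      (Finset.subset_univ _)
    rw [hu1, ← hE'] at htr
    have hBν : IsBMatching b2 E' (fun j : Fin 2 => (if j = 0 then some 1 else some 0 : Option (Fin 2))) := by
      constructor
      · intro j i h
        rcases cases2 (some i) with hc | hc | hc <;>
        rcases cases2 (some j) with hd | hd | hd <;>
          simp_all [E', Ef2, Function.update, b2]
      · decide
    have hwν : welfare q2 (fun j : Fin 2 => (if j = 0 then some 1 else some 0 : Option (Fin 2))) = 3 := by
      rw [welfare2, util2, util2]; norm_num [q2]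
    have hge' : (3:ℝ) ≤ welfare q2 (M 2 2 b2 q2 E') := by
      rw [← hwν]; exact hO 2 2 b2 q2 hV E' _ hBν
    obtain ⟨hE2, hL2⟩ := hF 2 2 b2 q2 E'
    rcases struct2 _ (hL2 0) (hL2 1) hge' with ⟨g0, g1⟩ | ⟨g0, g1⟩
    · have := hE2 1 1 g1
      simp [E', Ef2, Function.update] at this
    · have : util q2 (M 2 2 b2 q2 E') 1 = 2 := by
        rw [util2]; simp [g0, g1, q2]
      rw [this] at htr; linarith
  · -- agent 0 gets task 1 (value 1); deviates to {0}
    have hu0 : util q2 (M 2 2 b2 q2 Ef2) 0 = 1 := by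
      rw [util2]; simp [h0, h1, q2]
    set E' : Fin 2 → Finset (Fin 2) := Function.update Ef2 0 {0} with hE'
    have htr := hT 2 2 b2 q2 hV Ef2 0 {0} ⟨0, Finset.mem_singleton_self 0⟩
      (Finset.subset_univ _)
    rw [hu0, ← hE'] at htr
    have hBν : IsBMatching b2 E' (fun j : Fin 2 => some j) := by
      constructor
      · intro j i h
        rcases cases2 (some i) with hc | hc | hc <;>
        rcases cases2 (some j) with hd | hd | hd <;>
          simp_all [E', Ef2, Function.update, b2]
      · decide
    have hwν : welfare q2 (fun j : Fin 2 => some j) = 3 := by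
      rw [welfare2, util2, util2]; norm_num [q2]
    have hge' : (3:ℝ) ≤ welfare q2 (M 2 2 b2 q2 E') := by
      rw [← hwν]; exact hO 2 2 b2 q2 hV E' _ hBν
    obtain ⟨hE2, hL2⟩ := hF 2 2 b2 q2 E'
    rcases struct2 _ (hL2 0) (hL2 1) hge' with ⟨g0, g1⟩ | ⟨g0, g1⟩
    · have : util q2 (M 2 2 b2 q2 E') 0 = 2 := by
        rw [util2]; simp [g0, g1, q2]
      rw [this] at htr; linarith
    · have := hE2 1 0 g1
      simp [E', Ef2, Function.update] at this
end

section
/- The mechanism M_AP is truthful: for every MVbM instance with true edge profile (T_1,…,T_n), every agent a_i, and every nonempty report S_i ⊆ T_i, the utility of a_i under M_AP(S_i, T_{-i}) is at most its utility under M_AP(T_1,…,T_n). -/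
section Aux

variable {n m : ℕ} (b : Fin n → ℕ) (q : Fin m → ℝ) (E : Fin n → Finset (Fin m))

lemma taskOrder_perm : (taskOrder q).Perm (List.finRange m) :=
  List.mergeSort_perm _ _

lemma taskOrder_nodup : (taskOrder q).Nodup :=
  (taskOrder_perm q).nodup_iff.mpr (List.nodup_finRange m)

lemma mem_taskOrder (x : Fin m) : x ∈ taskOrder q :=
  (taskOrder_perm q).mem_iff.mpr (List.mem_finRange x)

lemma taskOrder_sorted : (taskOrder q).Pairwise (fun j k => q k ≤ q j) := by
  have h := List.pairwise_mergeSort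
    (le := fun (j k : Fin m) => decide (q k < q j ∨ (q j = q k ∧ j ≤ k)))
    (by
      intro a b c hab hbc
      simp only [decide_eq_true_iff] at *
      rcases hab with h1 | ⟨h1, h1'⟩ <;> rcases hbc with h2 | ⟨h2, h2'⟩
      · exact Or.inl (h2.trans h1)
      · exact Or.inl (h2 ▸ h1)
      · exact Or.inl (h1 ▸ h2)
      · exact Or.inr ⟨h1.trans h2, h1'.trans h2'⟩)
    (by
      intro a b
      simp only [Bool.or_eq_true, decide_eq_true_iff]
      rcases lt_trichotomy (q a) (q b) with h | h | h
      · exact Or.inr (Or.inl h)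
      · rcases le_total a b with h' | h'
        · exact Or.inl (Or.inr ⟨h, h'⟩)
        · exact Or.inr (Or.inr ⟨h.symm, h'⟩)
      · exact Or.inl (Or.inl h))
    (List.finRange m)
  refine h.imp ?_
  intro a b hab
  simp only [decide_eq_true_iff] at hab
  rcases hab with h | ⟨h, _⟩
  · exact h.le
  · exact h.ge

lemma mem_topTasks {S : Finset (Fin m)} {k : ℕ} {x : Fin m} :
    x ∈ topTasks q S k ↔ x ∈ ((taskOrder q).filter fun j => decide (j ∈ S)).take k := by
  simp [topTasks]

lemma topTasks_subset {S : Finset (Fin m)} {k : ℕ} : topTasks q S k ⊆ S := by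
  intro x hx
  rw [mem_topTasks] at hx
  have := List.mem_of_mem_take hx
  simp only [List.mem_filter, decide_eq_true_iff] at this
  exact this.2

lemma filter_taskOrder_nodup (S : Finset (Fin m)) :
    ((taskOrder q).filter fun j => decide (j ∈ S)).Nodup :=
  (taskOrder_nodup q).filter _

lemma card_topTasks_le {S : Finset (Fin m)} {k : ℕ} : (topTasks q S k).card ≤ k := by
  classical
  calc (topTasks q S k).card
      ≤ (((taskOrder q).filter fun j => decide (j ∈ S)).take k).length :=
        List.toFinset_card_le _
    _ ≤ k := by simpa using List.length_take_le _ _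

lemma remTasks_anti {k k' : ℕ} (h : k ≤ k') : remTasks b q E k' ⊆ remTasks b q E k := by
  induction k' with
  | zero => simp_all
  | succ k'' ih =>
    rcases Nat.lt_or_ge k (k'' + 1) with hlt | hge
    · have h2 : remTasks b q E (k'' + 1) ⊆ remTasks b q E k'' := by
        rw [remTasks]
        split
        · exact Finset.sdiff_subset
        · exact subset_rfl
      exact h2.trans (ih (Nat.lt_succ_iff.mp hlt))
    · have : k = k'' + 1 := le_antisymm h hge
      subst this; exact subset_rfl

lemma not_mem_remTasks {k : ℕ} (hk : k ≤ n) (x : Fin m) :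
    x ∉ remTasks b q E k ↔ ∃ i : Fin n, i.val < k ∧ x ∈ FCFS b q E i := by
  induction k with
  | zero => simp [remTasks]
  | succ k' ih =>
    have hk' : k' < n := hk
    rw [remTasks, dif_pos hk']
    simp only [Finset.mem_sdiff, not_and, not_not]
    constructor
    · intro h
      by_cases hx : x ∈ remTasks b q E k'
      · exact ⟨⟨k', hk'⟩, Nat.lt_succ_self k', h hx⟩
      · obtain ⟨i, hi, hxi⟩ := (ih (le_of_lt hk')).mp hx
        exact ⟨i, Nat.lt_succ_of_lt hi, hxi⟩
    · rintro ⟨i, hi, hxi⟩ hx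
      rcases Nat.lt_succ_iff_lt_or_eq.mp hi with hi' | hi'
      · exact absurd hx (fun h => absurd ((ih (le_of_lt hk')).mpr ⟨i, hi', hxi⟩) (not_not.mpr h))
      · have : i = ⟨k', hk'⟩ := Fin.ext hi'
        subst this
        exact hxi

lemma FCFS_subset_remTasks (i : Fin n) : FCFS b q E i ⊆ remTasks b q E i.val := by
  intro x hx
  have := topTasks_subset q (S := E i ∩ remTasks b q E i.val) (k := b i) hx
  exact (Finset.mem_inter.mp this).2

lemma FCFS_subset_E (i : Fin n) : FCFS b q E i ⊆ E i := by
  intro x hx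
  have := topTasks_subset q (S := E i ∩ remTasks b q E i.val) (k := b i) hx
  exact (Finset.mem_inter.mp this).1

lemma FCFS_disjoint {i i' : Fin n} (h : i ≠ i') :
    Disjoint (FCFS b q E i) (FCFS b q E i') := by
  wlog hlt : i < i' generalizing i i'
  · exact (this h.symm ((h.lt_or_gt).resolve_left hlt)).symm
  rw [Finset.disjoint_left]
  intro x hx hx'
  have h1 : x ∉ remTasks b q E (i.val + 1) := by
    rw [remTasks, dif_pos i.isLt]
    simp only [Finset.mem_sdiff, not_and, not_not]
    intro _
    simpa [FCFS] using hx
  have h2 : x ∈ remTasks b q E i'.val := FCFS_subset_remTasks b q E i' hx'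
  exact h1 (remTasks_anti b q E (Nat.succ_le_of_lt hlt) h2)

end Aux

section Find

lemma find?_finRange_eq_none {n : ℕ} {p : Fin n → Bool} :
    (List.finRange n).find? p = none ↔ ∀ k, p k = false := by
  rw [List.find?_eq_none]
  constructor
  · intro h k
    simpa using h k (List.mem_finRange k)
  · intro h k _
    simp [h k]

lemma find?_finRange_eq_some {n : ℕ} {p : Fin n → Bool} {i : Fin n} :
    (List.finRange n).find? p = some i ↔ p i = true ∧ ∀ k, k < i → p k = false := by
  constructor
  · intro h
    obtain ⟨hp, as, bs, hdecomp, hforall⟩ := List.find?_eq_some_iff_append.mp h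
    refine ⟨hp, fun k hk => ?_⟩
    have hlen : as.length < (List.finRange n).length := by
      rw [hdecomp]; simp
    have hlen2 : as.length < (as ++ i :: bs).length := by simp
    have hgetas : (List.finRange n)[as.length] = i := by
      rw [List.getElem_of_eq hdecomp hlen]
      rw [List.getElem_append_right (le_refl as.length)]
      simp
    have hasl : as.length = i.val := by
      have := List.getElem_finRange (n := n) (i := as.length) hlen
      rw [hgetas] at this
      exact congrArg Fin.val this.symm
    have hkmem : k ∈ as := by
      have hk2 : k.val < as.length := hasl ▸ hk
      have hget : as[k.val] = k := by
        have h0 : (List.finRange n)[k.val]'(by simpa using k.isLt) = k := by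
          simp [List.getElem_finRange]
        rw [List.getElem_of_eq hdecomp (by simpa using k.isLt),
          List.getElem_append_left hk2] at h0
        exact h0
      exact hget ▸ List.getElem_mem _
    simpa using hforall k hkmem
  · rintro ⟨hp, hmin⟩
    apply List.find?_eq_some_iff_append.mpr
    refine ⟨hp, (List.finRange n).take i.val, (List.finRange n).drop (i.val + 1), ?_, ?_⟩
    · have h1 : (List.finRange n).drop i.val
          = i :: (List.finRange n).drop (i.val + 1) := by
        rw [List.drop_eq_getElem_cons (by simpa using i.isLt)]
        simp [List.getElem_finRange]
      rw [← h1, List.take_append_drop]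
    · intro a ha
      obtain ⟨j, hj, hja⟩ := List.getElem_of_mem ha
      have hj' : j < i.val := by
        simpa using (List.length_take .. ▸ hj : j < min i.val (List.finRange n).length).trans_le
          (min_le_left _ _)
      have : a = ⟨j, lt_trans hj' i.isLt⟩ := by
        rw [← hja, List.getElem_take]
        simp [List.getElem_finRange]
      rw [this]
      simp [hmin ⟨j, _⟩ hj']

end Find

section Target

variable {n m : ℕ} (b : Fin n → ℕ) (q : Fin m → ℝ) (E : Fin n → Finset (Fin m))

noncomputable def targetAg (x : Fin m) : Option (Fin n) :=
  (List.finRange n).find? fun i => decide (x ∈ FCFS b q E i)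

lemma targetAg_eq_some_iff {x : Fin m} {i : Fin n} :
    targetAg b q E x = some i ↔ x ∈ FCFS b q E i := by
  constructor
  · intro h
    have := (find?_finRange_eq_some.mp h).1
    simpa using this
  · intro hx
    rcases h : targetAg b q E x with _ | i'
    · rw [targetAg, find?_finRange_eq_none] at h
      have := h i
      simp [hx] at this
    · have hx' : x ∈ FCFS b q E i' := by
        have := (find?_finRange_eq_some.mp h).1
        simpa using this
      have : i' = i := by
        by_contra hne
        exact (Finset.disjoint_left.mp (FCFS_disjoint b q E hne) hx') hx
      rw [this]

lemma filter_decomp {P Q : List (Fin m)} {x : Fin m} {S : Finset (Fin m)}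
    (hdec : taskOrder q = P ++ x :: Q) (hxS : x ∈ S) :
    ((taskOrder q).filter fun j => decide (j ∈ S))
      = (P.filter fun j => decide (j ∈ S)) ++ x :: (Q.filter fun j => decide (j ∈ S)) := by
  rw [hdec, List.filter_append, List.filter_cons]
  simp [hxS]

lemma mem_topTasks_of_lt {P Q : List (Fin m)} {x : Fin m} {S : Finset (Fin m)} {k : ℕ}
    (hdec : taskOrder q = P ++ x :: Q) (hxS : x ∈ S)
    (h : (P.filter fun j => decide (j ∈ S)).length < k) :
    x ∈ topTasks q S k := by
  rw [mem_topTasks, filter_decomp q hdec hxS, List.take_append,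
    List.mem_append]
  right
  obtain ⟨d, hd⟩ : ∃ d, k - (P.filter fun j => decide (j ∈ S)).length = d + 1 :=
    ⟨_, (Nat.succ_pred_eq_of_pos (by omega)).symm⟩
  rw [hd, List.take_succ_cons]
  exact List.mem_cons_self

lemma topTasks_of_ge {P Q : List (Fin m)} {x : Fin m} {S : Finset (Fin m)} {k : ℕ}
    (hdec : taskOrder q = P ++ x :: Q) (hxS : x ∈ S)
    (h : k ≤ (P.filter fun j => decide (j ∈ S)).length) :
    topTasks q S k ⊆ P.toFinset ∧ (topTasks q S k).card = k := by
  have htake : ((taskOrder q).filter fun j => decide (j ∈ S)).take k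
      = (P.filter fun j => decide (j ∈ S)).take k := by
    rw [filter_decomp q hdec hxS, List.take_append_of_le_length h]
  have hsub : ((P.filter fun j => decide (j ∈ S)).take k).Sublist (taskOrder q) := by
    refine ((List.take_sublist _ _).trans List.filter_sublist).trans ?_
    rw [hdec]
    exact List.sublist_append_left _ _
  constructor
  · intro y hy
    rw [mem_topTasks, htake] at hy
    exact List.mem_toFinset.mpr (List.mem_of_mem_filter (List.mem_of_mem_take hy))
  · rw [topTasks, htake, List.toFinset_card_of_nodup (hsub.nodup (taskOrder_nodup q)),
      List.length_take]
    omega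

lemma load_eq_card {P : List (Fin m)} {μ : Matching n m}
    (hμ : ∀ x, μ x = if x ∈ P then targetAg b q E x else none) (i : Fin n) :
    load μ i = (P.toFinset ∩ FCFS b q E i).card := by
  rw [load]
  congr 1
  ext x
  simp only [Finset.mem_filter, Finset.mem_univ, true_and, Finset.mem_inter,
    List.mem_toFinset, hμ x]
  by_cases hx : x ∈ P
  · simp [hx, targetAg_eq_some_iff]
  · simp [hx]

lemma apStep_inv {P Q : List (Fin m)} {j : Fin m} {μ : Matching n m}
    (hdec : taskOrder q = P ++ j :: Q)
    (hμ : ∀ x, μ x = if x ∈ P then targetAg b q E x else none) :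
    ∀ x, apStep b E μ j x = if x ∈ P ++ [j] then targetAg b q E x else none := by
  have hjP : j ∉ P := by
    have hnd : (P ++ j :: Q).Nodup := hdec ▸ taskOrder_nodup q
    have := (List.nodup_append'.mp hnd).2.2
    intro hj
    exact this hj List.mem_cons_self
  have hload : ∀ i, load μ i = (P.toFinset ∩ FCFS b q E i).card := load_eq_card b q E hμ
  -- claim A
  have claimA : ∀ i : Fin n, j ∈ FCFS b q E i → load μ i < b i := by
    intro i hj
    rw [hload]
    calc (P.toFinset ∩ FCFS b q E i).card
        ≤ ((FCFS b q E i).erase j).card := by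
          apply Finset.card_le_card
          intro y hy
          rw [Finset.mem_inter, List.mem_toFinset] at hy
          rw [Finset.mem_erase]
          exact ⟨fun he => hjP (he ▸ hy.1), hy.2⟩
      _ < (FCFS b q E i).card := Finset.card_erase_lt_of_mem hj
      _ ≤ b i := card_topTasks_le q
  -- claim B
  have claimB : ∀ i : Fin n, j ∈ E i → j ∈ remTasks b q E i.val → j ∉ FCFS b q E i →
      load μ i = b i := by
    intro i hjE hjR hjF
    have hjS : j ∈ E i ∩ remTasks b q E i.val := Finset.mem_inter.mpr ⟨hjE, hjR⟩
    have hge : b i ≤ ((P.filter fun x => decide (x ∈ E i ∩ remTasks b q E i.val)).length) := by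
      by_contra hlt
      exact hjF (mem_topTasks_of_lt q hdec hjS (by omega))
    obtain ⟨hsub, hcard⟩ := topTasks_of_ge q hdec hjS hge
    have hsub' : FCFS b q E i ⊆ P.toFinset := hsub
    rw [hload, Finset.inter_eq_right.mpr hsub']
    exact hcard
  -- claim C
  have claimC : ∀ i : Fin n, j ∉ remTasks b q E i.val →
      ∃ i' : Fin n, i'.val < i.val ∧ j ∈ FCFS b q E i' :=
    fun i hi => (not_mem_remTasks b q E (le_of_lt i.isLt) j).mp hi
  have hfind : (List.finRange n).find? (fun i => decide (j ∈ E i ∧ load μ i < b i))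
      = targetAg b q E j := by
    rcases htar : targetAg b q E j with _ | i0
    · rw [targetAg, find?_finRange_eq_none] at htar
      rw [find?_finRange_eq_none]
      intro k
      rw [decide_eq_false_iff_not]
      rintro ⟨hjE, hlt⟩
      by_cases hR : j ∈ remTasks b q E k.val
      · have hjF : j ∉ FCFS b q E k := by
          have := htar k; simpa using this
        rw [claimB k hjE hR hjF] at hlt
        omega
      · obtain ⟨i', _, hFi'⟩ := claimC k hR
        have := htar i'
        simp [hFi'] at this
    · rw [targetAg, find?_finRange_eq_some] at htar
      obtain ⟨h1, hmin⟩ := htar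
      rw [decide_eq_true_iff] at h1
      rw [find?_finRange_eq_some]
      constructor
      · rw [decide_eq_true_iff]
        exact ⟨FCFS_subset_E b q E i0 h1, claimA i0 h1⟩
      · intro k hk
        rw [decide_eq_false_iff_not]
        rintro ⟨hjE, hlt⟩
        by_cases hR : j ∈ remTasks b q E k.val
        · have hjF : j ∉ FCFS b q E k := by
            have := hmin k hk; simpa using this
          rw [claimB k hjE hR hjF] at hlt
          omega
        · obtain ⟨i', hi', hFi'⟩ := claimC k hR
          have : i' < i0 := lt_trans (show i' < k from hi') hk
          have := hmin i' this
          simp [hFi'] at this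
  intro x
  rw [apStep, hfind]
  rcases htar : targetAg b q E j with _ | i0
  · show μ x = _
    rw [hμ x]
    by_cases hx : x ∈ P
    · simp [hx]
    · by_cases hxj : x = j
      · subst hxj
        simp [hx, htar]
      · simp [hx, hxj]
  · show Function.update μ j (some i0) x = _
    by_cases hxj : x = j
    · subst hxj
      rw [Function.update_self]
      simp [htar]
    · rw [Function.update_of_ne hxj, hμ x]
      by_cases hx : x ∈ P
      · simp [hx]
      · simp [hx, hxj]

lemma foldl_inv (Q : List (Fin m)) : ∀ (P : List (Fin m)) (μ : Matching n m),
    taskOrder q = P ++ Q →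
    (∀ x, μ x = if x ∈ P then targetAg b q E x else none) →
    ∀ x, (Q.foldl (apStep b E) μ) x = if x ∈ P ++ Q then targetAg b q E x else none := by
  induction Q with
  | nil =>
    intro P μ hdec hμ x
    simpa using hμ x
  | cons j Q' ih =>
    intro P μ hdec hμ x
    have h1 := apStep_inv b q E hdec hμ
    have h2 := ih (P ++ [j]) (apStep b E μ j) (by rw [hdec]; simp) h1 x
    simp only [List.foldl_cons]
    rw [h2]
    simp [List.mem_append, or_assoc]

lemma MAP_eq_target (x : Fin m) : MAP b q E x = targetAg b q E x := by
  have := foldl_inv b q E (taskOrder q) [] (fun _ => none) (by simp) (fun x => rfl) x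
  rw [MAP, this]
  simp [mem_taskOrder]

lemma assignedSet_MAP (i : Fin n) : assignedSet (MAP b q E) i = FCFS b q E i := by
  ext x
  simp [assignedSet, MAP_eq_target, targetAg_eq_some_iff]

end Target

section Final

variable {n m : ℕ} (b : Fin n → ℕ) (q : Fin m → ℝ)

lemma remTasks_congr {E E' : Fin n → Finset (Fin m)} {k : ℕ}
    (h : ∀ i : Fin n, i.val < k → E i = E' i) :
    remTasks b q E k = remTasks b q E' k := by
  induction k with
  | zero => rfl
  | succ k' ih =>
    have ih' := ih (fun i hi => h i (Nat.lt_succ_of_lt hi))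
    rw [remTasks, remTasks, ih']
    split
    · next hk => rw [h ⟨k', hk⟩ (Nat.lt_succ_self k')]
    · rfl

lemma sum_take_succ_le (l : List (Fin m)) (c : ℝ) (hc : 0 ≤ c)
    (hl : ∀ x ∈ l, q x ≤ c) :
    ∀ k, ((l.take (k+1)).map q).sum ≤ c + ((l.take k).map q).sum := by
  induction l with
  | nil => intro k; simpa using hc
  | cons x l' ih =>
    intro k
    cases k with
    | zero =>
      simpa using hl x List.mem_cons_self
    | succ k' =>
      simp only [List.take_succ_cons, List.map_cons, List.sum_cons]
      have := ih (fun y hy => hl y (List.mem_cons_of_mem _ hy)) k'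
      linarith

lemma sum_take_le_sum_take (hq : ∀ j, 0 ≤ q j) {A B : List (Fin m)} (hAB : A.Sublist B) :
    B.Pairwise (fun j k => q k ≤ q j) →
    ∀ k, ((A.take k).map q).sum ≤ ((B.take k).map q).sum := by
  induction hAB with
  | slnil => intro _ k; simp
  | @cons l₁ l₂ a h ih =>
    intro hB k
    have hB' := List.Pairwise.of_cons hB
    have h1 := ih hB' k
    cases k with
    | zero => simpa using h1
    | succ k' =>
      rw [List.take_succ_cons, List.map_cons, List.sum_cons]
      have h2 := sum_take_succ_le q l₂ (q a) (hq a) (List.pairwise_cons.mp hB).1 k'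
      linarith
  | @cons_cons l₁ l₂ a h ih =>
    intro hB k
    cases k with
    | zero => simp
    | succ k' =>
      simp only [List.take_succ_cons, List.map_cons, List.sum_cons]
      have := ih (List.Pairwise.of_cons hB) k'
      linarith

lemma sum_topTasks_mono (hq : ∀ j, 0 ≤ q j) {S S' : Finset (Fin m)} (hSS : S ⊆ S')
    (k : ℕ) : ∑ j ∈ topTasks q S k, q j ≤ ∑ j ∈ topTasks q S' k, q j := by
  have hndA : (((taskOrder q).filter fun j => decide (j ∈ S)).take k).Nodup :=
    ((List.take_sublist _ _).trans List.filter_sublist).nodup (taskOrder_nodup q)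
  have hndB : (((taskOrder q).filter fun j => decide (j ∈ S')).take k).Nodup :=
    ((List.take_sublist _ _).trans List.filter_sublist).nodup (taskOrder_nodup q)
  rw [topTasks, topTasks, List.sum_toFinset _ hndA, List.sum_toFinset _ hndB]
  apply sum_take_le_sum_take q hq
  · exact List.monotone_filter_right _ (fun a ha => by
      simp only [decide_eq_true_iff] at *
      exact hSS ha)
  · exact (taskOrder_sorted q).sublist List.filter_sublist

end Final

/-- `M_AP` is truthful: no agent can increase its utility by reporting a nonempty
subset of its true edge set. -/
theorem MAP_truthful (n m : ℕ) (b : Fin n → ℕ) (q : Fin m → ℝ)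
    (hb : ∀ i, 1 ≤ b i) (hq : ∀ j, 0 < q j)
    (T : Fin n → Finset (Fin m)) (i : Fin n) (S : Finset (Fin m))
    (hS : S.Nonempty) (hsub : S ⊆ T i) :
    util q (MAP b q (Function.update T i S)) i ≤ util q (MAP b q T) i := by

  classical
  have hrem : remTasks b q (Function.update T i S) i.val = remTasks b q T i.val := by
    apply remTasks_congr
    intro i' hi'
    rw [Function.update_of_ne (fun he => by subst he; exact lt_irrefl _ hi')]
  rw [util, util, assignedSet_MAP, assignedSet_MAP]
  unfold FCFS
  rw [hrem, Function.update_self]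
  exact sum_topTasks_mono q (fun j => (hq j).le)
    (Finset.inter_subset_inter hsub (le_refl _)) (b i)
end

section
/- For every MVbM instance with edge profile E and every b-matching μ for E, the welfare of the matching returned by M_AP on E satisfies 2·w(M_AP(E)) ≥ w(μ); in particular, the welfare of M_AP(E) is at least half of the maximum welfare over all b-matchings for E. -/
section Aux

variable {n m : ℕ} (b : Fin n → ℕ) (E : Fin n → Finset (Fin m))

lemma mem_assignedSet {μ : Matching n m} {i : Fin n} {j : Fin m} :
    j ∈ assignedSet μ i ↔ μ j = some i := by simp [assignedSet]

lemma load_eq_card_s2 (μ : Matching n m) (i : Fin n) : load μ i = (assignedSet μ i).card := rfl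

lemma apStep_apply_ne (μ : Matching n m) (j j' : Fin m) (h : j' ≠ j) :
    apStep b E μ j j' = μ j' := by
  unfold apStep
  cases (List.finRange n).find? (fun i => decide (j ∈ E i ∧ load μ i < b i)) with
  | none => rfl
  | some i => exact Function.update_of_ne h _ _

lemma foldl_apply_not_mem (l : List (Fin m)) (μ : Matching n m) (j : Fin m) (h : j ∉ l) :
    (l.foldl (apStep b E) μ) j = μ j := by
  induction l generalizing μ with
  | nil => rfl
  | cons a l ih =>
    simp only [List.mem_cons, not_or] at h
    rw [List.foldl_cons, ih _ h.2, apStep_apply_ne b E μ a j h.1]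

lemma load_apStep_le (μ : Matching n m) (j : Fin m) (hμ : ∀ i, load μ i ≤ b i) (i : Fin n) :
    load (apStep b E μ j) i ≤ b i := by
  unfold apStep
  cases hfind : (List.finRange n).find? (fun i => decide (j ∈ E i ∧ load μ i < b i)) with
  | none => exact hμ i
  | some i₀ =>
    have hi₀ := List.find?_some hfind
    simp only [decide_eq_true_eq] at hi₀
    by_cases hii : i = i₀
    · subst hii
      have hsub : assignedSet (Function.update μ j (some i)) i ⊆ insert j (assignedSet μ i) := by
        intro j' hj'
        rw [mem_assignedSet] at hj'
        by_cases hjj : j' = j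
        · simp [hjj]
        · rw [Function.update_of_ne hjj] at hj'
          exact Finset.mem_insert_of_mem (mem_assignedSet.mpr hj')
      calc load (Function.update μ j (some i)) i ≤ (insert j (assignedSet μ i)).card :=
            Finset.card_le_card hsub
        _ ≤ load μ i + 1 := Finset.card_insert_le _ _
        _ ≤ b i := hi₀.2
    · have hsub : assignedSet (Function.update μ j (some i₀)) i ⊆ assignedSet μ i := by
        intro j' hj'
        rw [mem_assignedSet] at hj'
        by_cases hjj : j' = j
        · subst hjj
          rw [Function.update_self] at hj'
          exact absurd (Option.some_inj.mp hj').symm hii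
        · rw [Function.update_of_ne hjj] at hj'
          exact mem_assignedSet.mpr hj'
      exact le_trans (Finset.card_le_card hsub) (hμ i)

lemma load_foldl_le (l : List (Fin m)) (μ : Matching n m) (hμ : ∀ i, load μ i ≤ b i) :
    ∀ i, load (l.foldl (apStep b E) μ) i ≤ b i := by
  induction l generalizing μ with
  | nil => exact hμ
  | cons a l ih => exact ih _ (load_apStep_le b E μ a hμ)

lemma assignedSet_subset_foldl (l : List (Fin m)) (μ : Matching n m)
    (hfresh : ∀ j ∈ l, μ j = none) (i : Fin n) :
    assignedSet μ i ⊆ assignedSet (l.foldl (apStep b E) μ) i := by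
  intro j' hj'
  rw [mem_assignedSet] at hj' ⊢
  have hmem : j' ∉ l := fun h => by simp [hfresh j' h] at hj'
  rw [foldl_apply_not_mem b E l μ j' hmem, hj']

lemma full_of_unassigned (q : Fin m → ℝ) (j : Fin m) (i : Fin n)
    (hnone : MAP b q E j = none) (hE : j ∈ E i) :
    load (MAP b q E) i = b i ∧ ∀ j' ∈ assignedSet (MAP b q E) i, q j ≤ q j' := by
  classical
  have hperm : (taskOrder q).Perm (List.finRange m) := List.mergeSort_perm _ _
  have hnodup : (taskOrder q).Nodup := hperm.nodup_iff.mpr (List.nodup_finRange m)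
  have hjmem : j ∈ taskOrder q := hperm.mem_iff.mpr (List.mem_finRange j)
  obtain ⟨l₁, l₂, hL⟩ := List.append_of_mem hjmem
  have hinit : ∀ i, load (fun _ => none : Matching n m) i ≤ b i := by
    intro i; simp [load]
  set μ₁ : Matching n m := l₁.foldl (apStep b E) (fun _ => none) with hμ₁
  rw [hL] at hnodup
  rw [List.nodup_append] at hnodup
  obtain ⟨hnd₁, hnd₂, hdisj⟩ := hnodup
  have hjl₂ : j ∉ l₂ := by
    have := hnd₂; rw [List.nodup_cons] at this; exact this.1
  have hsplit : MAP b q E = l₂.foldl (apStep b E) (apStep b E μ₁ j) := by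
    rw [MAP, hL, List.foldl_append, List.foldl_cons]
  have hμ₂j : apStep b E μ₁ j j = none := by
    rw [hsplit] at hnone
    rwa [foldl_apply_not_mem b E l₂ _ j hjl₂] at hnone
  have hfind : (List.finRange n).find? (fun i => decide (j ∈ E i ∧ load μ₁ i < b i)) = none := by
    cases hf : (List.finRange n).find? (fun i => decide (j ∈ E i ∧ load μ₁ i < b i)) with
    | none => rfl
    | some i₀ =>
      exfalso
      unfold apStep at hμ₂j
      rw [hf] at hμ₂j
      simp at hμ₂j
  have hμ₁le : ∀ i, load μ₁ i ≤ b i := load_foldl_le b E l₁ _ hinit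
  have hful : load μ₁ i = b i := by
    have h := List.find?_eq_none.mp hfind i (List.mem_finRange i)
    simp only [decide_eq_true_eq, not_and, not_lt] at h
    exact le_antisymm (hμ₁le i) (h hE)
  have hstep : apStep b E μ₁ j = μ₁ := by unfold apStep; rw [hfind]
  have hF : MAP b q E = l₂.foldl (apStep b E) μ₁ := by rw [hsplit, hstep]
  have hfresh : ∀ j'' ∈ l₂, μ₁ j'' = none := by
    intro j'' hj''
    have : j'' ∉ l₁ := fun hh => hdisj j'' hh j'' (List.mem_cons_of_mem j hj'') rfl
    rw [hμ₁, foldl_apply_not_mem b E l₁ _ j'' this]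
  have hsub : assignedSet μ₁ i ⊆ assignedSet (MAP b q E) i := by
    rw [hF]; exact assignedSet_subset_foldl b E l₂ μ₁ hfresh i
  have hFle : load (MAP b q E) i ≤ b i := by
    rw [hF]; exact load_foldl_le b E l₂ μ₁ hμ₁le i
  have hset : assignedSet μ₁ i = assignedSet (MAP b q E) i := by
    apply Finset.eq_of_subset_of_card_le hsub
    rw [← load_eq_card_s2, ← load_eq_card_s2, hful]
    exact hFle
  constructor
  · rw [load_eq_card_s2, ← hset, ← load_eq_card_s2, hful]
  · intro j' hj'
    rw [← hset, mem_assignedSet] at hj'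
    have hj'l₁ : j' ∈ l₁ := by
      by_contra hcc
      rw [hμ₁, foldl_apply_not_mem b E l₁ _ j' hcc] at hj'
      exact nomatch hj'
    -- sortedness
    have htot : ∀ a c : Fin m,
        (fun j k => decide (q k < q j ∨ (q j = q k ∧ j ≤ k))) a c
          || (fun j k => decide (q k < q j ∨ (q j = q k ∧ j ≤ k))) c a := by
      intro a c
      simp only [Bool.or_eq_true, decide_eq_true_eq]
      rcases lt_trichotomy (q a) (q c) with h | h | h
      · right; left; exact h
      · rcases le_total a c with h' | h'
        · left; right; exact ⟨h, h'⟩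
        · right; right; exact ⟨h.symm, h'⟩
      · left; left; exact h
    have htr : ∀ a c d : Fin m,
        (fun j k => decide (q k < q j ∨ (q j = q k ∧ j ≤ k))) a c →
        (fun j k => decide (q k < q j ∨ (q j = q k ∧ j ≤ k))) c d →
        (fun j k => decide (q k < q j ∨ (q j = q k ∧ j ≤ k))) a d := by
      intro a c d hac hcd
      simp only [decide_eq_true_eq] at *
      rcases hac with h1 | ⟨h1, h1'⟩ <;> rcases hcd with h2 | ⟨h2, h2'⟩
      · left; exact h2.trans h1
      · left; rwa [← h2]
      · left; rwa [h1]
      · right; exact ⟨h1.trans h2, h1'.trans h2'⟩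
    have hsorted : (taskOrder q).Pairwise
        (fun j k => ((fun j k => decide (q k < q j ∨ (q j = q k ∧ j ≤ k))) j k = true)) :=
      List.pairwise_mergeSort htr htot _
    rw [hL, List.pairwise_append] at hsorted
    have hle := hsorted.2.2 j' hj'l₁ j List.mem_cons_self
    simp only [decide_eq_true_eq] at hle
    rcases hle with h | ⟨h, _⟩
    · exact le_of_lt h
    · exact le_of_eq h.symm

lemma welfare_eq (q : Fin m → ℝ) (ν : Matching n m) :
    welfare q ν = ∑ j ∈ Finset.univ.filter (fun j => (ν j).isSome), q j := by
  classical
  unfold welfare util assignedSet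
  rw [Finset.sum_filter]
  simp only [Finset.sum_filter]
  rw [Finset.sum_comm]
  refine Finset.sum_congr rfl fun j _ => ?_
  cases h : ν j with
  | none => simp [h]
  | some i₀ => simp [h, Finset.sum_ite_eq]

lemma sum_le_sum_of_card_le_aux {S T : Finset (Fin m)} {f : Fin m → ℝ}
    (hcard : S.card ≤ T.card) (hT : 0 < T.card)
    (h : ∀ s ∈ S, ∀ t ∈ T, f s ≤ f t) (hf : ∀ x, 0 ≤ f x) :
    ∑ s ∈ S, f s ≤ ∑ t ∈ T, f t := by
  have hc : (0:ℝ) < T.card := by exact_mod_cast hT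
  have hTn : (0:ℝ) ≤ ∑ t ∈ T, f t := Finset.sum_nonneg fun t _ => hf t
  have havg : ∀ s ∈ S, f s ≤ (∑ t ∈ T, f t) / T.card := by
    intro s hs
    rw [le_div_iff₀ hc]
    calc f s * T.card = ∑ _t ∈ T, f s := by rw [Finset.sum_const, nsmul_eq_mul, mul_comm]
      _ ≤ ∑ t ∈ T, f t := Finset.sum_le_sum (h s hs)
  calc ∑ s ∈ S, f s ≤ ∑ _s ∈ S, (∑ t ∈ T, f t) / T.card := Finset.sum_le_sum havg
    _ = S.card * ((∑ t ∈ T, f t) / T.card) := by rw [Finset.sum_const, nsmul_eq_mul]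
    _ ≤ T.card * ((∑ t ∈ T, f t) / T.card) := by
        apply mul_le_mul_of_nonneg_right _ (by positivity)
        exact_mod_cast hcard
    _ = ∑ t ∈ T, f t := by
        rw [mul_comm, div_mul_cancel₀ _ (ne_of_gt hc)]

end Aux

/-- The welfare of the matching returned by `M_AP` is at least half the welfare of any
`b`-matching of the same edge profile; in particular it is a `2`-approximation of the
maximum welfare. -/
theorem MAP_two_approximation (n m : ℕ) (b : Fin n → ℕ) (q : Fin m → ℝ)
    (hb : ∀ i, 1 ≤ b i) (hq : ∀ j, 0 < q j)
    (E : Fin n → Finset (Fin m)) (μ : Matching n m) (hμ : IsBMatching b E μ) :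
    welfare q μ ≤ 2 * welfare q (MAP b q E) := by
  classical
  set F := MAP b q E with hFdef
  have hq0 : ∀ j, 0 ≤ q j := fun j => le_of_lt (hq j)
  have hsplit : welfare q μ =
      (∑ i, ∑ j ∈ (assignedSet μ i).filter (fun j => (F j).isSome), q j)
      + (∑ i, ∑ j ∈ (assignedSet μ i).filter (fun j => ¬(F j).isSome), q j) := by
    rw [← Finset.sum_add_distrib]
    unfold welfare util
    exact Finset.sum_congr rfl fun i _ => (Finset.sum_filter_add_sum_filter_not _ _ _).symm
  have hdisj : Set.PairwiseDisjoint (↑(Finset.univ : Finset (Fin n)))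
      (fun i => (assignedSet μ i).filter (fun j => (F j).isSome)) := by
    intro i _ i' _ hne
    rw [Function.onFun, Finset.disjoint_left]
    intro j hj hj'
    have h1 := mem_assignedSet.mp (Finset.mem_filter.mp hj).1
    have h2 := mem_assignedSet.mp (Finset.mem_filter.mp hj').1
    rw [h1] at h2
    exact hne (Option.some_inj.mp h2)
  have h1 : (∑ i, ∑ j ∈ (assignedSet μ i).filter (fun j => (F j).isSome), q j)
      ≤ welfare q F := by
    rw [welfare_eq, ← Finset.sum_biUnion hdisj]
    apply Finset.sum_le_sum_of_subset_of_nonneg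
    · intro j hj
      obtain ⟨i, _, hji⟩ := Finset.mem_biUnion.mp hj
      exact Finset.mem_filter.mpr ⟨Finset.mem_univ j, (Finset.mem_filter.mp hji).2⟩
    · intro j _ _
      exact hq0 j
  have h2 : (∑ i, ∑ j ∈ (assignedSet μ i).filter (fun j => ¬(F j).isSome), q j)
      ≤ welfare q F := by
    unfold welfare
    apply Finset.sum_le_sum
    intro i _
    unfold util
    set S := (assignedSet μ i).filter (fun j => ¬(F j).isSome) with hSdef
    rcases S.eq_empty_or_nonempty with hS | hS
    · rw [hS, Finset.sum_empty]
      exact Finset.sum_nonneg fun j _ => hq0 j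
    · obtain ⟨j₀, hj₀⟩ := hS
      have hj₀' := Finset.mem_filter.mp hj₀
      have hE₀ : j₀ ∈ E i := hμ.1 j₀ i (mem_assignedSet.mp hj₀'.1)
      have hnone₀ : F j₀ = none := Option.not_isSome_iff_eq_none.mp hj₀'.2
      have hfull := (full_of_unassigned b E q j₀ i hnone₀ hE₀).1
      apply sum_le_sum_of_card_le_aux
      · calc S.card ≤ (assignedSet μ i).card := Finset.card_filter_le _ _
          _ ≤ b i := hμ.2 i
          _ = (assignedSet F i).card := by rw [← load_eq_card_s2, hfull]
      · rw [← load_eq_card_s2, hfull]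
        exact lt_of_lt_of_le Nat.zero_lt_one (hb i)
      · intro s hs t ht
        have hs' := Finset.mem_filter.mp hs
        exact (full_of_unassigned b E q s i (Option.not_isSome_iff_eq_none.mp hs'.2)
          (hμ.1 s i (mem_assignedSet.mp hs'.1))).2 t ht
      · exact hq0
  rw [hsplit]
  linarith
end

section
/- The approximation guarantee 2 of M_AP is tight: for every ε > 0 there exists an MVbM instance with edge profile E and a b-matching μ for E such that w(μ) > (2 − ε)·w(M_AP(E)). (For example, two agents of capacity 1, tasks of values 1+δ and 1, with T_1 = {t_1, t_2} and T_2 = {t_1}, for δ small.) -/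
/-- The approximation guarantee `2` of `M_AP` is tight: for every `ε > 0` there is an
MVbM instance and a `b`-matching whose welfare exceeds `(2 - ε)` times the welfare of
the matching returned by `M_AP`. -/
theorem MAP_two_approximation_tight (ε : ℝ) (hε : 0 < ε) :
    ∃ (n m : ℕ) (b : Fin n → ℕ) (q : Fin m → ℝ)
      (E : Fin n → Finset (Fin m)) (μ : Matching n m),
      (∀ i, 1 ≤ b i) ∧ (∀ j, 0 < q j) ∧ IsBMatching b E μ ∧
      welfare q μ > (2 - ε) * welfare q (MAP b q E) := by
  set q : Fin 2 → ℝ := fun j => if j = 0 then 1 + ε else 1 with hq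
  set E : Fin 2 → Finset (Fin 2) := ![{0, 1}, {0}] with hE
  set b : Fin 2 → ℕ := fun _ => 1 with hb
  set μ : Matching 2 2 := fun j => if j = 0 then some 1 else some 0 with hμ
  set ν : Matching 2 2 := Function.update (fun _ => none) 0 (some 0) with hν
  refine ⟨2, 2, b, q, E, μ, fun _ => le_refl 1, ?_, ⟨?_, ?_⟩, ?_⟩
  · intro j
    by_cases h : j = 0 <;> simp [hq, h] <;> linarith
  · decide
  · decide
  · have hd : decide (q 1 < q 0) = true := by simp [hq]; linarith
    have hto : taskOrder q = [0, 1] := by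
      simp [taskOrder, List.finRange, List.mergeSort, List.merge, hd]
    have hmap : MAP b q E = ν := by
      rw [MAP, hto]
      show apStep b E (apStep b E (fun _ => none) 0) 1 = _
      rfl
    rw [hmap]
    have hA : welfare q (ν) = 1 + ε := by
      have e0 : assignedSet (ν) (0 : Fin 2) = {0} := by
        decide
      have e1 : assignedSet (ν) (1 : Fin 2) = ∅ := by
        decide
      simp [welfare, util, Fin.sum_univ_two, e0, e1, hq]
    have hB : welfare q μ = 2 + ε := by
      have e0 : assignedSet μ (0 : Fin 2) = {1} := by decide
      have e1 : assignedSet μ (1 : Fin 2) = {0} := by decide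
      simp [welfare, util, Fin.sum_univ_two, e0, e1, hq]
      ring
    rw [hA, hB]
    nlinarith [sq_nonneg ε, hε]
end

section
/- For every MVbM instance with edge profile E, the b-matching returned by M_AP on E coincides with the FCFS allocation of E: each agent a_i is assigned exactly the set B_i. -/
namespace MAPProof

variable {n m : ℕ}

/-- The boolean comparison used by `taskOrder`. -/
noncomputable def leq (q : Fin m → ℝ) (j k : Fin m) : Bool := decide (q k < q j ∨ (q j = q k ∧ j ≤ k))

lemma leq_trans (q : Fin m → ℝ) :
    ∀ a b c, leq q a b = true → leq q b c = true → leq q a c = true := by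
  intro a b c
  simp only [leq, decide_eq_true_eq]
  rintro (h1 | ⟨h1, h1'⟩) (h2 | ⟨h2, h2'⟩)
  · exact Or.inl (by linarith)
  · exact Or.inl (by linarith [le_of_eq h2])
  · exact Or.inl (by rw [h1]; exact h2)
  · exact Or.inr ⟨h1.trans h2, h1'.trans h2'⟩

lemma leq_total (q : Fin m → ℝ) : ∀ a b, (leq q a b || leq q b a) = true := by
  intro a b
  simp only [leq, Bool.or_eq_true, decide_eq_true_eq]
  rcases lt_trichotomy (q a) (q b) with h | h | h
  · exact Or.inr (Or.inl h)
  · rcases le_total a b with h' | h'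
    · exact Or.inl (Or.inr ⟨h, h'⟩)
    · exact Or.inr (Or.inr ⟨h.symm, h'⟩)
  · exact Or.inl (Or.inl h)

lemma leq_antisymm (q : Fin m → ℝ) {a b : Fin m}
    (h1 : leq q a b = true) (h2 : leq q b a = true) : a = b := by
  simp only [leq, decide_eq_true_eq] at h1 h2
  rcases h1 with h1 | ⟨h1, h1'⟩ <;> rcases h2 with h2 | ⟨h2, h2'⟩
  · exfalso; linarith
  · exfalso; rw [h2] at h1; exact lt_irrefl _ h1
  · exfalso; rw [h1] at h2; exact lt_irrefl _ h2
  · exact le_antisymm h1' h2'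

lemma taskOrder_eq (q : Fin m → ℝ) :
    taskOrder q = (List.finRange m).mergeSort (leq q) := rfl

lemma taskOrder_pairwise (q : Fin m → ℝ) :
    (taskOrder q).Pairwise (fun a b => leq q a b = true) := by
  rw [taskOrder_eq]
  exact List.pairwise_mergeSort (leq_trans q) (leq_total q) _

lemma taskOrder_perm (q : Fin m → ℝ) : (taskOrder q).Perm (List.finRange m) :=
  List.mergeSort_perm _ _

lemma taskOrder_nodup (q : Fin m → ℝ) : (taskOrder q).Nodup :=
  ((taskOrder_perm q).nodup_iff).mpr (List.nodup_finRange m)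

lemma mem_taskOrder (q : Fin m → ℝ) (j : Fin m) : j ∈ taskOrder q :=
  ((taskOrder_perm q).mem_iff).mpr (List.mem_finRange j)

lemma topTasks_subset (q : Fin m → ℝ) (S : Finset (Fin m)) (k : ℕ) :
    topTasks q S k ⊆ S := by
  intro x hx
  simp only [topTasks, List.mem_toFinset] at hx
  have hx2 := List.mem_of_mem_take hx
  simpa using (List.mem_filter.mp hx2).2

lemma topTasks_card_le (q : Fin m → ℝ) (S : Finset (Fin m)) (k : ℕ) :
    (topTasks q S k).card ≤ k := by
  refine le_trans (List.toFinset_card_le _) ?_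
  rw [List.length_take]
  exact min_le_left _ _

/-- If `j ∈ S` is not among the top tasks, then the top set is full (card `k`)
and every one of its elements strictly precedes `j` in the order. -/
lemma topTasks_full (q : Fin m → ℝ) (S : Finset (Fin m)) (k : ℕ) {j : Fin m}
    (hjS : j ∈ S) (hj : j ∉ topTasks q S k) :
    (topTasks q S k).card = k ∧
      ∀ x ∈ topTasks q S k, leq q x j = true ∧ x ≠ j := by
  set Lf := (taskOrder q).filter (fun j => decide (j ∈ S)) with hLfdef
  have hnd : Lf.Nodup := (taskOrder_nodup q).filter _
  have hsorted : Lf.Pairwise (fun a b => leq q a b = true) :=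
    List.Pairwise.sublist List.filter_sublist (taskOrder_pairwise q)
  have hjLf : j ∈ Lf := List.mem_filter.mpr ⟨mem_taskOrder q j, by simpa⟩
  have htop : topTasks q S k = (Lf.take k).toFinset := rfl
  have hjtake : j ∉ Lf.take k := fun h => hj (by rw [htop]; exact List.mem_toFinset.mpr h)
  have hdecomp : Lf.take k ++ Lf.drop k = Lf := List.take_append_drop k Lf
  have hjdrop : j ∈ Lf.drop k := by
    rcases List.mem_append.mp (by rw [hdecomp]; exact hjLf) with h | h
    · exact absurd h hjtake
    · exact h
  have hk : k < Lf.length := by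
    have h0 : 0 < (Lf.drop k).length := List.length_pos_iff.mpr (List.ne_nil_of_mem hjdrop)
    rw [List.length_drop] at h0
    omega
  have htakel : (Lf.take k).length = k := by
    rw [List.length_take]; omega
  have hndtake : (Lf.take k).Nodup := (List.take_sublist _ _).nodup hnd
  have hcross : ∀ x ∈ Lf.take k, ∀ y ∈ Lf.drop k, leq q x y = true := by
    have := List.pairwise_append.mp (by rw [hdecomp]; exact hsorted)
    exact this.2.2
  constructor
  · rw [htop, List.toFinset_card_of_nodup hndtake, htakel]
  · intro x hx
    have hxl : x ∈ Lf.take k := List.mem_toFinset.mp (by rw [htop] at hx; exact hx)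
    refine ⟨hcross x hxl j hjdrop, ?_⟩
    rintro rfl
    exact hjtake hxl

lemma mem_remTasks (b : Fin n → ℕ) (q : Fin m → ℝ) (E : Fin n → Finset (Fin m))
    (j : Fin m) : ∀ k : ℕ,
    j ∈ remTasks b q E k ↔ ∀ i : Fin n, i.val < k → j ∉ FCFS b q E i := by
  intro k
  induction k with
  | zero => simp [remTasks]
  | succ k ih =>
    rw [remTasks]
    split_ifs with h
    · rw [Finset.mem_sdiff, ih]
      constructor
      · rintro ⟨h1, h2⟩ i hi
        rcases Nat.lt_or_ge i.val k with hk | hk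
        · exact h1 i hk
        · have hik : i = ⟨k, h⟩ := Fin.ext (by simp only [Fin.val_mk]; omega)
          rw [hik]
          exact h2
      · intro hall
        exact ⟨fun i hi => hall i (Nat.lt_succ_of_lt hi), hall ⟨k, h⟩ (Nat.lt_succ_self k)⟩
    · rw [ih]
      constructor
      · intro h1 i hi
        exact h1 i (by have := i.isLt; omega)
      · intro h1 i hi
        exact h1 i (by omega)

lemma FCFS_mem_E_rem (b : Fin n → ℕ) (q : Fin m → ℝ) (E : Fin n → Finset (Fin m))
    {i : Fin n} {j : Fin m} (h : j ∈ FCFS b q E i) :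
    j ∈ E i ∧ j ∈ remTasks b q E i.val :=
  Finset.mem_inter.mp (topTasks_subset q _ _ h)

lemma FCFS_unique (b : Fin n → ℕ) (q : Fin m → ℝ) (E : Fin n → Finset (Fin m))
    {j : Fin m} {i i' : Fin n} (h : j ∈ FCFS b q E i) (h' : j ∈ FCFS b q E i') :
    i = i' := by
  by_contra hne
  have hv : i.val ≠ i'.val := fun hv => hne (Fin.ext hv)
  rcases Nat.lt_or_ge i.val i'.val with hlt | hge
  · exact (mem_remTasks b q E j i'.val).mp (FCFS_mem_E_rem b q E h').2 i hlt h
  · have hlt : i'.val < i.val := by omega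
    exact (mem_remTasks b q E j i.val).mp (FCFS_mem_E_rem b q E h).2 i' hlt h'

/-- `find?` returns the first element satisfying `p` in a strictly ordered list. -/
lemma find?_first {α : Type*} (p : α → Bool) (R : α → α → Prop) :
    ∀ l : List α, l.Pairwise R → ∀ a ∈ l, p a = true →
      (∀ x, R x a → p x = false) → l.find? p = some a := by
  intro l
  induction l with
  | nil => intro _ a ha; simp at ha
  | cons hd tl ih =>
    intro hp a ha hpa hmin
    rcases List.mem_cons.mp ha with rfl | ha'
    · exact List.find?_cons_of_pos hpa
    · have hR : R hd a := (List.pairwise_cons.mp hp).1 a ha'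
      have hhd : p hd = false := hmin hd hR
      rw [List.find?_cons_of_neg (by simp [hhd])]
      exact ih (List.pairwise_cons.mp hp).2 a ha' hpa hmin

lemma step_invariant (b : Fin n → ℕ) (q : Fin m → ℝ) (E : Fin n → Finset (Fin m))
    (L₁ L₂ : List (Fin m)) (j : Fin m) (hL : taskOrder q = L₁ ++ j :: L₂)
    (μ : Matching n m)
    (hinv : ∀ i, assignedSet μ i = FCFS b q E i ∩ L₁.toFinset) :
    ∀ i, assignedSet (apStep b E μ j) i = FCFS b q E i ∩ (L₁ ++ [j]).toFinset := by
  have hnd : (L₁ ++ j :: L₂).Nodup := hL ▸ taskOrder_nodup q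
  have hjL₁ : j ∉ L₁ := fun h =>
    (List.nodup_append'.mp hnd).2.2 h List.mem_cons_self
  have hpair : (L₁ ++ j :: L₂).Pairwise (fun a b => leq q a b = true) :=
    hL ▸ taskOrder_pairwise q
  have hprefix : ∀ k : Fin m, leq q k j = true → k ≠ j → k ∈ L₁ := by
    intro k hk hkj
    have hkmem : k ∈ L₁ ++ j :: L₂ := hL ▸ mem_taskOrder q k
    rcases List.mem_append.mp hkmem with h | h
    · exact h
    · rcases List.mem_cons.mp h with rfl | h
      · exact absurd rfl hkj
      · have hjk : leq q j k = true :=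
          (List.pairwise_cons.mp (List.pairwise_append.mp hpair).2.1).1 k h
        exact absurd (leq_antisymm q hk hjk) hkj
  have hload : ∀ i, load μ i = (FCFS b q E i ∩ L₁.toFinset).card := by
    intro i
    have : load μ i = (assignedSet μ i).card := rfl
    rw [this, hinv i]
  -- Claim A: agents i with j available but not in their FCFS set are full.
  have hA : ∀ i : Fin n, j ∈ remTasks b q E i.val → j ∉ FCFS b q E i →
      ¬(j ∈ E i ∧ load μ i < b i) := by
    rintro i hrem hnotF ⟨hEi, hlt⟩
    have hjS : j ∈ E i ∩ remTasks b q E i.val := Finset.mem_inter.mpr ⟨hEi, hrem⟩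
    obtain ⟨hcard, hall⟩ := topTasks_full q (E i ∩ remTasks b q E i.val) (b i) hjS hnotF
    have hsub : FCFS b q E i ⊆ L₁.toFinset := by
      intro x hx
      obtain ⟨h1, h2⟩ := hall x hx
      exact List.mem_toFinset.mpr (hprefix x h1 h2)
    have heq : FCFS b q E i ∩ L₁.toFinset = FCFS b q E i := Finset.inter_eq_left.mpr hsub
    rw [hload i, heq] at hlt
    have : (FCFS b q E i).card = b i := hcard
    omega
  by_cases hex : ∃ i₀, j ∈ FCFS b q E i₀
  · obtain ⟨i₀, hi₀⟩ := hex
    have hEi₀ := (FCFS_mem_E_rem b q E hi₀).1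
    have hremi₀ := (FCFS_mem_E_rem b q E hi₀).2
    have hload₀ : load μ i₀ < b i₀ := by
      rw [hload i₀]
      have hss : FCFS b q E i₀ ∩ L₁.toFinset ⊂ FCFS b q E i₀ := by
        refine Finset.ssubset_iff_of_subset Finset.inter_subset_left |>.mpr ⟨j, hi₀, ?_⟩
        simp only [Finset.mem_inter, List.mem_toFinset, not_and]
        exact fun _ => hjL₁
      exact lt_of_lt_of_le (Finset.card_lt_card hss) (topTasks_card_le q _ _)
    have hfind : (List.finRange n).find?
        (fun i => decide (j ∈ E i ∧ load μ i < b i)) = some i₀ := by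
      apply find?_first _ (· < ·) _ (List.pairwise_lt_finRange n) i₀ (List.mem_finRange i₀)
      · simp only [decide_eq_true_eq]
        exact ⟨hEi₀, hload₀⟩
      · intro i hlt
        simp only [decide_eq_false_iff_not]
        have hivlt : i.val < i₀.val := hlt
        have hnotF : j ∉ FCFS b q E i :=
          (mem_remTasks b q E j i₀.val).mp hremi₀ i hivlt
        have hrem : j ∈ remTasks b q E i.val := by
          rw [mem_remTasks]
          intro i' hi'
          exact (mem_remTasks b q E j i₀.val).mp hremi₀ i' (by omega)
        exact hA i hrem hnotF
    intro i
    ext x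
    simp only [apStep, hfind, assignedSet, Finset.mem_filter, Finset.mem_univ, true_and,
      Finset.mem_inter, List.toFinset_append, List.toFinset_cons, List.toFinset_nil,
      Finset.mem_union, List.mem_toFinset]
    by_cases hx : x = j
    · subst hx
      rw [Function.update_self]
      constructor
      · intro h
        have : i = i₀ := by injection h with h'; exact h'.symm
        subst this
        simp [hi₀]
      · rintro ⟨hF, _⟩
        rw [FCFS_unique b q E hF hi₀]
    · rw [Function.update_of_ne hx]
      have := hinv i
      have hx' : (x ∈ assignedSet μ i) ↔ x ∈ FCFS b q E i ∩ L₁.toFinset := by rw [this]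
      simp only [assignedSet, Finset.mem_filter, Finset.mem_univ, true_and,
        Finset.mem_inter, List.mem_toFinset] at hx'
      rw [hx']
      simp [hx]
  · push_neg at hex
    have hrem : ∀ i : Fin n, j ∈ remTasks b q E i.val := by
      intro i
      rw [mem_remTasks]
      exact fun i' _ => hex i'
    have hfind : (List.finRange n).find?
        (fun i => decide (j ∈ E i ∧ load μ i < b i)) = none := by
      rw [List.find?_eq_none]
      intro i _
      simp only [decide_eq_true_eq]
      exact hA i (hrem i) (hex i)
    intro i
    simp only [apStep, hfind]
    rw [hinv i]
    ext x
    simp only [Finset.mem_inter, List.toFinset_append, List.toFinset_cons,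
      List.toFinset_nil, Finset.mem_union, List.mem_toFinset]
    by_cases hx : x = j
    · subst hx
      simp [hex i]
    · simp [hx]

lemma main_invariant (b : Fin n → ℕ) (q : Fin m → ℝ) (E : Fin n → Finset (Fin m)) :
    ∀ L₂ L₁ (μ : Matching n m), taskOrder q = L₁ ++ L₂ →
    (∀ i, assignedSet μ i = FCFS b q E i ∩ L₁.toFinset) →
    ∀ i, assignedSet (L₂.foldl (apStep b E) μ) i = FCFS b q E i := by
  intro L₂
  induction L₂ with
  | nil =>
    intro L₁ μ hL hinv i
    rw [List.foldl_nil, hinv i]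
    apply Finset.inter_eq_left.mpr
    intro x _
    rw [List.mem_toFinset]
    have : x ∈ L₁ ++ ([] : List (Fin m)) := hL ▸ mem_taskOrder q x
    simpa using this
  | cons j L₂ ih =>
    intro L₁ μ hL hinv i
    rw [List.foldl_cons]
    refine ih (L₁ ++ [j]) (apStep b E μ j) (by rw [hL]; simp) ?_ i
    exact step_invariant b q E L₁ L₂ j hL μ hinv

end MAPProof

/-- The matching returned by `M_AP` coincides with the FCFS allocation: each agent
`a_i` is assigned exactly the set `B_i`. -/
theorem MAP_eq_FCFS (n m : ℕ) (b : Fin n → ℕ) (q : Fin m → ℝ)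
    (hb : ∀ i, 1 ≤ b i) (hq : ∀ j, 0 < q j)
    (E : Fin n → Finset (Fin m)) (i : Fin n) :
    assignedSet (MAP b q E) i = FCFS b q E i := by
  apply MAPProof.main_invariant b q E (taskOrder q) [] (fun _ => none) rfl
  intro i'
  ext x
  simp [assignedSet]
end

section
/- Under M_AP, lowering one's reported capacity can only shrink one's allocation: fix the edge reports of all agents and the capacity reports of all agents other than a_i; if c'_i ≤ c_i, then the set of tasks that M_AP assigns to agent a_i when a_i reports capacity c'_i is a subset of the set of tasks M_AP assigns to a_i when it reports capacity c_i. -/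
lemma load_eq {n m : ℕ} (μ : Matching n m) (y : Fin n) :
    load μ y = (assignedSet μ y).card := rfl

lemma find?_sorted_iff {α : Type*} {r : α → α → Prop}
    (hr : ∀ a b, r a b → ¬ r b a) (p : α → Bool) (a : α) :
    ∀ (l : List α), l.Pairwise r →
    (l.find? p = some a ↔ a ∈ l ∧ p a = true ∧ ∀ x ∈ l, r x a → p x = false) := by
  intro l hl
  induction l with
  | nil => simp
  | cons hd tl ih =>
    rw [List.pairwise_cons] at hl
    obtain ⟨hhd, htl⟩ := hl
    by_cases hph : p hd = true
    · rw [List.find?_cons_of_pos hph]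
      constructor
      · rintro h
        injection h with h; subst h
        refine ⟨List.mem_cons_self, hph, ?_⟩
        intro x hx hrx
        rcases List.mem_cons.mp hx with rfl | hx
        · exact absurd hrx (hr _ _ hrx)
        · exact absurd hrx (hr _ _ (hhd x hx))
      · rintro ⟨hmem, hpa, hall⟩
        rcases List.mem_cons.mp hmem with rfl | hmem
        · rfl
        · exact absurd (hall hd (List.mem_cons_self) (hhd a hmem)) (by simp [hph])
    · rw [List.find?_cons_of_neg hph]
      rw [ih htl]
      constructor
      · rintro ⟨hmem, hpa, hall⟩
        refine ⟨List.mem_cons_of_mem _ hmem, hpa, ?_⟩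
        intro x hx hrx
        rcases List.mem_cons.mp hx with rfl | hx
        · simpa using hph
        · exact hall x hx hrx
      · rintro ⟨hmem, hpa, hall⟩
        rcases List.mem_cons.mp hmem with rfl | hmem
        · exact absurd hpa hph
        · exact ⟨hmem, hpa, fun x hx hrx => hall x (List.mem_cons_of_mem _ hx) hrx⟩

lemma find?_finRange_some {n : ℕ} (p : Fin n → Bool) (a : Fin n) :
    (List.finRange n).find? p = some a ↔ p a = true ∧ ∀ x, x < a → p x = false := by
  rw [find?_sorted_iff (r := (· < ·)) (fun a b hab hba => absurd hba (lt_asymm hab)) p a _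
    (List.pairwise_lt_finRange n)]
  simp [List.mem_finRange]

lemma assignedSet_update {n m : ℕ} (μ : Matching n m) (j : Fin m) (a y : Fin n)
    (hj : μ j = none) :
    assignedSet (Function.update μ j (some a)) y =
      if a = y then insert j (assignedSet μ y) else assignedSet μ y := by
  ext k
  by_cases hk : k = j
  · subst hk
    simp only [assignedSet, Finset.mem_filter, Finset.mem_univ, true_and,
      Function.update_self]
    split <;> rename_i hay <;> simp [hay, hj]
  · simp only [assignedSet, Finset.mem_filter, Finset.mem_univ, true_and,
      Function.update_of_ne hk]
    split <;> simp [assignedSet, hk]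

lemma step_inv {n m : ℕ} (E : Fin n → Finset (Fin m)) (c : Fin n → ℕ) (i : Fin n)
    (c' : ℕ) (h : c' ≤ c i) (μ μ' : Matching n m) (j : Fin m)
    (hj : μ j = none) (hj' : μ' j = none)
    (hA : ∀ a : Fin n, a < i → assignedSet μ' a = assignedSet μ a)
    (hB : assignedSet μ' i ⊆ assignedSet μ i)
    (hC : assignedSet μ' i ≠ assignedSet μ i → c' ≤ load μ' i) :
    (∀ a : Fin n, a < i → assignedSet (apStep (Function.update c i c') E μ' j) a
        = assignedSet (apStep c E μ j) a) ∧
    assignedSet (apStep (Function.update c i c') E μ' j) i ⊆ assignedSet (apStep c E μ j) i ∧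
    (assignedSet (apStep (Function.update c i c') E μ' j) i ≠ assignedSet (apStep c E μ j) i
      → c' ≤ load (apStep (Function.update c i c') E μ' j) i) := by
  set b' : Fin n → ℕ := Function.update c i c' with hb'
  have hb'i : b' i = c' := Function.update_self _ _ _
  have hb'ne : ∀ x : Fin n, x ≠ i → b' x = c x := fun x hx => Function.update_of_ne hx _ _
  set p : Fin n → Bool := fun x => decide (j ∈ E x ∧ load μ x < c x) with hp
  set p' : Fin n → Bool := fun x => decide (j ∈ E x ∧ load μ' x < b' x) with hp'
  have hloadlt : ∀ x : Fin n, x < i → load μ' x = load μ x := by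
    intro x hx; rw [load_eq, load_eq, hA x hx]
  have hagree : ∀ x : Fin n, x < i → p' x = p x := by
    intro x hx
    simp only [hp, hp', hloadlt x hx, hb'ne x (ne_of_lt hx)]
  have hstep : apStep c E μ j =
      match (List.finRange n).find? p with
      | some a => Function.update μ j (some a) | none => μ := rfl
  have hstep' : apStep b' E μ' j =
      match (List.finRange n).find? p' with
      | some a => Function.update μ' j (some a) | none => μ' := rfl
  cases hf' : (List.finRange n).find? p' with
  | some a =>
    rw [find?_finRange_some] at hf'
    obtain ⟨hpa, hbelow⟩ := hf'
    have hμ' : apStep b' E μ' j = Function.update μ' j (some a) := by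
      rw [hstep', (find?_finRange_some _ _).mpr ⟨hpa, hbelow⟩]
    simp only [hp', decide_eq_true_eq] at hpa
    rcases lt_trichotomy a i with hai | rfl | hai
    · -- a < i : both runs assign j to a
      have hpa2 : p a = true := by
        rw [← hagree a hai]; simp only [hp', decide_eq_true_eq]; exact hpa
      have hμ : apStep c E μ j = Function.update μ j (some a) := by
        rw [hstep, (find?_finRange_some _ _).mpr ⟨hpa2, fun x hx =>
          by rw [← hagree x (hx.trans hai)]; exact hbelow x hx⟩]
      rw [hμ, hμ']
      refine ⟨?_, ?_, ?_⟩
      · intro y hy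
        rw [assignedSet_update _ _ _ _ hj, assignedSet_update _ _ _ _ hj', hA y hy]
      · rw [assignedSet_update _ _ _ _ hj, assignedSet_update _ _ _ _ hj',
          if_neg (ne_of_lt hai), if_neg (ne_of_lt hai)]
        exact hB
      · rw [assignedSet_update _ _ _ _ hj, assignedSet_update _ _ _ _ hj',
          if_neg (ne_of_lt hai), if_neg (ne_of_lt hai), load_eq,
          assignedSet_update _ _ _ _ hj', if_neg (ne_of_lt hai), ← load_eq]
        exact hC
    · -- a = i : both runs assign j to i
      have hload' : load μ' a < c' := by rw [← hb'i]; exact hpa.2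
      have heq : assignedSet μ' a = assignedSet μ a := by
        by_contra hne
        exact absurd (hC hne) (not_le.mpr hload')
      have hpa2 : p a = true := by
        simp only [hp, decide_eq_true_eq]
        refine ⟨hpa.1, ?_⟩
        rw [load_eq, ← heq, ← load_eq]
        exact lt_of_lt_of_le hload' h
      have hμ : apStep c E μ j = Function.update μ j (some a) := by
        rw [hstep, (find?_finRange_some _ _).mpr ⟨hpa2, fun x hx =>
          by rw [← hagree x hx]; exact hbelow x hx⟩]
      rw [hμ, hμ']
      refine ⟨?_, ?_, ?_⟩
      · intro y hy
        rw [assignedSet_update _ _ _ _ hj, assignedSet_update _ _ _ _ hj',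
          if_neg (ne_of_gt hy), if_neg (ne_of_gt hy)]
        exact hA y hy
      · rw [assignedSet_update _ _ _ _ hj, assignedSet_update _ _ _ _ hj',
          if_pos rfl, if_pos rfl, heq]
      · rw [assignedSet_update _ _ _ _ hj, assignedSet_update _ _ _ _ hj',
          if_pos rfl, if_pos rfl, heq]
        intro hne; exact absurd rfl hne
    · -- i < a : μ' assigns to a > i; μ assigns to nobody below i
      have hpi' : p' i = false := hbelow i hai
      have hbelowμ : ∀ x : Fin n, x < i → p x = false := by
        intro x hx
        rw [← hagree x hx]; exact hbelow x (hx.trans hai)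
      have hAi' : ∀ y : Fin n, ¬ (a = y ∧ y ≤ i) := by
        rintro y ⟨rfl, hy⟩; exact absurd hai (not_lt.mpr hy)
      have hset' : ∀ y : Fin n, y ≤ i →
          assignedSet (apStep b' E μ' j) y = assignedSet μ' y := by
        intro y hy
        rw [hμ', assignedSet_update _ _ _ _ hj', if_neg (fun hh => hAi' y ⟨hh, hy⟩)]
      cases hf : (List.finRange n).find? p with
      | none =>
        have hμ : apStep c E μ j = μ := by rw [hstep, hf]
        rw [hμ]
        exact ⟨fun y hy => (hset' y (le_of_lt hy)).trans (hA y hy),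
          by rw [hset' i le_rfl]; exact hB,
          by rw [hset' i le_rfl, load_eq, hset' i le_rfl, ← load_eq]; exact hC⟩
      | some y =>
        have hpy : p y = true := List.find?_some hf
        have hyi : ¬ y < i := fun hh => by simp [hbelowμ y hh] at hpy
        have hμ : apStep c E μ j = Function.update μ j (some y) := by rw [hstep, hf]
        refine ⟨?_, ?_, ?_⟩
        · intro z hz
          rw [hset' z (le_of_lt hz), hμ, assignedSet_update _ _ _ _ hj,
            if_neg (by rintro rfl; exact hyi hz)]
          exact hA z hz
        · rw [hset' i le_rfl, hμ, assignedSet_update _ _ _ _ hj]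
          split
          · exact hB.trans (Finset.subset_insert _ _)
          · exact hB
        · intro hne
          rw [load_eq, hset' i le_rfl, ← load_eq]
          by_cases hyi2 : y = i
          · subst hyi2
            simp only [hp, decide_eq_true_eq] at hpy
            have := hpi'
            simp only [hp', hb'i, decide_eq_false_iff_not, not_and, not_lt] at this
            exact this hpy.1
          · apply hC
            intro hcc
            apply hne
            rw [hset' i le_rfl, hμ, assignedSet_update _ _ _ _ hj, if_neg hyi2, hcc]
  | none =>
    have hμ' : apStep b' E μ' j = μ' := by rw [hstep', hf']
    have hnone : ∀ x : Fin n, p' x = false := by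
      intro x
      have := List.find?_eq_none.mp hf' x (List.mem_finRange x)
      simpa using this
    have hbelowμ : ∀ x : Fin n, x < i → p x = false := by
      intro x hx; rw [← hagree x hx]; exact hnone x
    cases hf : (List.finRange n).find? p with
    | none =>
      have hμ : apStep c E μ j = μ := by rw [hstep, hf]
      rw [hμ, hμ']
      exact ⟨hA, hB, hC⟩
    | some y =>
      have hpy : p y = true := List.find?_some hf
      have hyi : ¬ y < i := fun hh => by simp [hbelowμ y hh] at hpy
      have hμ : apStep c E μ j = Function.update μ j (some y) := by rw [hstep, hf]
      rw [hμ, hμ']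
      refine ⟨?_, ?_, ?_⟩
      · intro z hz
        rw [assignedSet_update _ _ _ _ hj, if_neg (by rintro rfl; exact hyi hz)]
        exact hA z hz
      · rw [assignedSet_update _ _ _ _ hj]
        split
        · exact hB.trans (Finset.subset_insert _ _)
        · exact hB
      · intro hne
        by_cases hyi2 : y = i
        · subst hyi2
          simp only [hp, decide_eq_true_eq] at hpy
          have := hnone y
          simp only [hp', hb'i, decide_eq_false_iff_not, not_and, not_lt] at this
          exact this hpy.1
        · apply hC
          intro hcc
          apply hne
          rw [assignedSet_update _ _ _ _ hj, if_neg hyi2]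
          exact hcc

lemma foldl_inv_s13 {n m : ℕ} (E : Fin n → Finset (Fin m)) (c : Fin n → ℕ) (i : Fin n)
    (c' : ℕ) (h : c' ≤ c i) :
    ∀ (l : List (Fin m)), l.Nodup → ∀ (μ μ' : Matching n m),
    (∀ k ∈ l, μ k = none ∧ μ' k = none) →
    (∀ a : Fin n, a < i → assignedSet μ' a = assignedSet μ a) →
    assignedSet μ' i ⊆ assignedSet μ i →
    (assignedSet μ' i ≠ assignedSet μ i → c' ≤ load μ' i) →
    assignedSet (l.foldl (apStep (Function.update c i c') E) μ') i ⊆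
      assignedSet (l.foldl (apStep c E) μ) i := by
  intro l
  induction l with
  | nil => intro _ μ μ' _ _ hB _; simpa using hB
  | cons j l ih =>
    intro hnd μ μ' hnone hA hB hC
    simp only [List.foldl_cons]
    obtain ⟨hj, hj'⟩ := hnone j (List.mem_cons_self)
    obtain ⟨hA', hB', hC'⟩ := step_inv E c i c' h μ μ' j hj hj' hA hB hC
    refine ih (List.nodup_cons.mp hnd).2 _ _ ?_ hA' hB' hC'
    intro k hk
    have hkj : k ≠ j := fun hh => (List.nodup_cons.mp hnd).1 (hh ▸ hk)
    have h1 : apStep c E μ j k = μ k := by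
      unfold apStep
      cases (List.finRange n).find? _ with
      | some a => exact Function.update_of_ne hkj _ _
      | none => rfl
    have h2 : apStep (Function.update c i c') E μ' j k = μ' k := by
      unfold apStep
      cases (List.finRange n).find? _ with
      | some a => exact Function.update_of_ne hkj _ _
      | none => rfl
    rw [h1, h2]; exact hnone k (List.mem_cons_of_mem _ hk)

/-- Under `M_AP`, lowering one's reported capacity can only shrink one's allocation:
with the edge reports and the other agents' capacity reports fixed, if `c' ≤ c i` then
the set of tasks `M_AP` assigns to agent `a_i` when it reports capacity `c'` is a
subset of the set it is assigned when it reports capacity `c i`. -/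
theorem MAP_capacity_monotone (n m : ℕ) (q : Fin m → ℝ)
    (E : Fin n → Finset (Fin m)) (c : Fin n → ℕ) (i : Fin n)
    (c' : ℕ) (h : c' ≤ c i) :
    assignedSet (MAP (Function.update c i c') q E) i ⊆ assignedSet (MAP c q E) i := by
  have hnd : (taskOrder q).Nodup :=
    (List.mergeSort_perm (List.finRange m) _).symm.nodup (List.nodup_finRange m)
  unfold MAP
  refine foldl_inv_s13 E c i c' h (taskOrder q) hnd _ _ (fun k _ => ⟨rfl, rfl⟩)
    (fun a _ => rfl) (le_refl _) (fun hne => absurd rfl hne)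
end
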